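/- arXiv:1501.01234 — 4 statements merged into one kernel-verified Lean document; each statement's English description precedes it below -/
import Mathlib

section
/- Let Y₀ and Y₁ be random variables on a probability space (Ω, 𝒜, P) taking values in {1, …, k}, and assume the monotone treatment effect assumption P(Y₁ ≥ Y₀) = 1. Fix j ∈ {1, …, k} with P(Y₀ = j) > 0. Then every median m of the conditional distribution of Y₁ given the event {Y₀ = j} satisfies j ≤ m. -/
open MeasureTheory ProbabilityTheory

/-! Under monotonicity, `Y₁ ≥ Y₀ = j` almost surely on `{Y₀ = j}`, so the conditional law of `Y₁`
gives no mass to `{Y₁ ≤ m}` when `m < j`; a median needs mass `1/2` there. -/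

lemma le_of_ae_le_of_measure_setOf_le_ne_zero {Ω : Type*} [MeasurableSpace Ω] {Q : Measure Ω}
    {X : Ω → ℝ} {c m : ℝ} (hX : ∀ᵐ ω ∂Q, c ≤ X ω) (hm : Q {ω | X ω ≤ m} ≠ 0) : c ≤ m := by
  by_contra! hlt
  refine hm (measure_eq_zero_iff_ae_notMem.2 ?_)
  filter_upwards [hX] with ω hω
  exact not_le.2 (by linarith)

lemma ae_cond_of_ae_imp {Ω : Type*} [MeasurableSpace Ω] {P : Measure Ω} {A : Set Ω}
    (hA : MeasurableSet A) {p : Ω → Prop} (h : ∀ᵐ ω ∂P, ω ∈ A → p ω) : ∀ᵐ ω ∂P[|A], p ω := by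
  filter_upwards [ae_cond_mem hA, cond_absolutelyContinuous.ae_le h] with ω hω himp
  exact himp hω

theorem median_cond_eq_ge_of_monotone_general
    {Ω : Type*} [MeasurableSpace Ω] (P : Measure Ω) [IsProbabilityMeasure P]
    (Y₀ Y₁ : Ω → ℤ) (hY₀ : Measurable Y₀) (hY₁ : Measurable Y₁)
    (hmono : P {ω | Y₀ ω ≤ Y₁ ω} = 1)
    (j : ℤ)
    (m : ℝ)
    (hmed_le : (1 / 2 : ENNReal) ≤ P[|{ω | Y₀ ω = j}] {ω | (Y₁ ω : ℝ) ≤ m}) :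
    (j : ℝ) ≤ m := by
  have hmono_ae : ∀ᵐ ω ∂P, Y₀ ω ≤ Y₁ ω :=
    (ae_iff_measure_eq (measurableSet_le hY₀ hY₁).nullMeasurableSet).2 (by rw [hmono, measure_univ])
  have hge : ∀ᵐ ω ∂P[|{ω | Y₀ ω = j}], (j : ℝ) ≤ Y₁ ω := by
    refine ae_cond_of_ae_imp (hY₀ (measurableSet_singleton j)) ?_
    filter_upwards [hmono_ae] with ω hω (hj : Y₀ ω = j)
    exact_mod_cast hj ▸ hω
  exact le_of_ae_le_of_measure_setOf_le_ne_zero hge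
    (lt_of_lt_of_le (by norm_num) hmed_le).ne'

/-- Part 1 of the Proposition on bounds under monotonicity: under the monotone
treatment effect assumption `P(Y₁ ≥ Y₀) = 1`, for each `j ∈ {1, …, k}` with
`P(Y₀ = j) > 0`, every median `m` of the conditional distribution of `Y₁` given
`{Y₀ = j}` satisfies `j ≤ m`. -/
theorem median_cond_eq_ge_of_monotone
    {Ω : Type*} [MeasurableSpace Ω] (P : Measure Ω) [IsProbabilityMeasure P]
    (k : ℕ) (hk : 2 ≤ k)
    (Y₀ Y₁ : Ω → ℤ) (hY₀ : Measurable Y₀) (hY₁ : Measurable Y₁)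
    (hY₀range : ∀ ω, Y₀ ω ∈ Set.Icc (1 : ℤ) k)
    (hY₁range : ∀ ω, Y₁ ω ∈ Set.Icc (1 : ℤ) k)
    (hmono : P {ω | Y₀ ω ≤ Y₁ ω} = 1)
    (j : ℤ) (hj : j ∈ Set.Icc (1 : ℤ) k)
    (hpos : 0 < P {ω | Y₀ ω = j})
    (m : ℝ)
    (hmed_le : (1 / 2 : ENNReal) ≤ P[|{ω | Y₀ ω = j}] {ω | (Y₁ ω : ℝ) ≤ m})
    (hmed_ge : (1 / 2 : ENNReal) ≤ P[|{ω | Y₀ ω = j}] {ω | m ≤ (Y₁ ω : ℝ)}) :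
    (j : ℝ) ≤ m :=
  median_cond_eq_ge_of_monotone_general P Y₀ Y₁ hY₀ hY₁ hmono j m hmed_le
end

section
/- Let Y₀ and Y₁ be random variables on a probability space (Ω, 𝒜, P) taking values in {1, …, k}, and assume the monotone treatment effect assumption P(Y₁ ≥ Y₀) = 1. Fix j ∈ {1, …, k} with P(Y₀ ≤ j) > 0. Then the lower median of Y₀ under the conditional measure P(·|Y₀ ≤ j) is less than or equal to the lower median of Y₁ under the conditional measure P(·|Y₀ ≤ j). -/
/-!
Monotonicity holds almost surely under `P` and hence under `P(·|Y₀ ≤ j) ≪ P`, so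
`{Y₁ ≤ m} ⊆ {Y₀ ≤ m}` up to a null set for every `m`. Thus every `m` admissible for the lower
median of `Y₁` is admissible for that of `Y₀`, and an infimum over a larger set is smaller.
-/

open MeasureTheory ProbabilityTheory

/-- The lower median of an integer-valued random variable `X` under a
probability measure `Q`: the least integer `m` with `Q(X ≤ m) ≥ 1/2`. -/
noncomputable def lowerMedian {Ω : Type*} [MeasurableSpace Ω]
    (Q : Measure Ω) (X : Ω → ℤ) : ℤ :=
  sInf {m : ℤ | (1 / 2 : ENNReal) ≤ Q {ω | X ω ≤ m}}

section LowerMedian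

variable {Ω : Type*} [MeasurableSpace Ω] {Q : Measure Ω} {X Y : Ω → ℤ}

lemma measure_setOf_le_anti_of_ae_le (hXY : X ≤ᵐ[Q] Y) (m : ℤ) :
    Q {ω | Y ω ≤ m} ≤ Q {ω | X ω ≤ m} :=
  measure_mono_ae <| hXY.mono fun _ hle hYm => hle.trans hYm

lemma bddBelow_setOf_half_le_measure {a : ℤ} (ha : ∀ ω, a ≤ X ω) :
    BddBelow {m : ℤ | (1 / 2 : ENNReal) ≤ Q {ω | X ω ≤ m}} := by
  refine ⟨a, fun m hm => ?_⟩
  by_contra! hma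
  have hempty : {ω | X ω ≤ m} = ∅ :=
    Set.eq_empty_of_forall_notMem fun ω hω => (hma.trans_le (ha ω)).not_ge hω
  simp [hempty] at hm

/-- No integer is admissible, and `sInf ∅ = 0` in `ℤ`. -/
lemma lowerMedian_of_measure_univ_lt (hQ : Q Set.univ < 1 / 2) : lowerMedian Q X = 0 := by
  have hempty : {m : ℤ | (1 / 2 : ENNReal) ≤ Q {ω | X ω ≤ m}} = ∅ :=
    Set.eq_empty_of_forall_notMem fun m hm => ((measure_mono (Set.subset_univ _)).trans_lt hQ).not_ge hm
  rw [lowerMedian, hempty, Int.csInf_empty]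

theorem lowerMedian_mono_of_ae_le {a b : ℤ} (hXY : X ≤ᵐ[Q] Y) (ha : ∀ ω, a ≤ X ω)
    (hb : ∀ ω, Y ω ≤ b) : lowerMedian Q X ≤ lowerMedian Q Y := by
  rcases lt_or_ge (Q Set.univ) (1 / 2) with hQ | hQ
  · rw [lowerMedian_of_measure_univ_lt hQ, lowerMedian_of_measure_univ_lt hQ]
  have hYb : {ω | Y ω ≤ b} = Set.univ := Set.eq_univ_of_forall hb
  exact csInf_le_csInf (bddBelow_setOf_half_le_measure ha) ⟨b, by simpa [hYb] using hQ⟩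
    fun m hm => hm.trans (measure_setOf_le_anti_of_ae_le hXY m)

end LowerMedian

theorem lowerMedian_cond_le_of_monotone_general
    {Ω : Type*} [MeasurableSpace Ω] (P : Measure Ω) [IsProbabilityMeasure P]
    (k : ℕ)
    (Y₀ Y₁ : Ω → ℤ) (hY₀ : Measurable Y₀) (hY₁ : Measurable Y₁)
    (hY₀range : ∀ ω, Y₀ ω ∈ Set.Icc (1 : ℤ) k)
    (hY₁range : ∀ ω, Y₁ ω ∈ Set.Icc (1 : ℤ) k)
    (hmono : P {ω | Y₀ ω ≤ Y₁ ω} = 1)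
    (j : ℤ) :
    lowerMedian (P[|{ω | Y₀ ω ≤ j}]) Y₀ ≤ lowerMedian (P[|{ω | Y₀ ω ≤ j}]) Y₁ := by
  have hle : Y₀ ≤ᵐ[P] Y₁ :=
    (ae_iff_measure_eq (measurableSet_le hY₀ hY₁).nullMeasurableSet).2 (by rw [hmono, measure_univ])
  exact lowerMedian_mono_of_ae_le (cond_absolutelyContinuous.ae_le hle)
    (fun ω => (hY₀range ω).1) (fun ω => (hY₁range ω).2)

/-- Part 3 of the Proposition on bounds under monotonicity: under the monotone
treatment effect assumption `P(Y₁ ≥ Y₀) = 1`, for each `j` with `P(Y₀ ≤ j) > 0`,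
the lower median of `Y₀` under the conditional measure `P(·|Y₀ ≤ j)` is at most
the lower median of `Y₁` under the same conditional measure. -/
theorem lowerMedian_cond_le_of_monotone
    {Ω : Type*} [MeasurableSpace Ω] (P : Measure Ω) [IsProbabilityMeasure P]
    (k : ℕ) (hk : 2 ≤ k)
    (Y₀ Y₁ : Ω → ℤ) (hY₀ : Measurable Y₀) (hY₁ : Measurable Y₁)
    (hY₀range : ∀ ω, Y₀ ω ∈ Set.Icc (1 : ℤ) k)
    (hY₁range : ∀ ω, Y₁ ω ∈ Set.Icc (1 : ℤ) k)
    (hmono : P {ω | Y₀ ω ≤ Y₁ ω} = 1)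
    (j : ℤ) (hj : j ∈ Set.Icc (1 : ℤ) k)
    (hpos : 0 < P {ω | Y₀ ω ≤ j}) :
    lowerMedian (P[|{ω | Y₀ ω ≤ j}]) Y₀ ≤ lowerMedian (P[|{ω | Y₀ ω ≤ j}]) Y₁ :=
  lowerMedian_cond_le_of_monotone_general P k Y₀ Y₁ hY₀ hY₁ hY₀range hY₁range hmono j
end

section
/- Let Y₀ and Y₁ be random variables on a probability space (Ω, 𝒜, P) taking values in {1, 2, 3}, and assume the monotone at-most-one-category effect: P(Y₀ ≤ Y₁ ≤ Y₀ + 1) = 1. If P(Y₀ = 1) > 0 and P(Y₀ = 2) > 0, then the conditional one-step transition probabilities are identified from the marginal distributions: P(Y₁ = 2 | Y₀ = 1) = 1 − P(Y₁ = 1)/P(Y₀ = 1), and P(Y₁ = 3 | Y₀ = 2) = (P(Y₁ = 3) − P(Y₀ = 3))/P(Y₀ = 2). -/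
open MeasureTheory ProbabilityTheory

/-! Since `Y₀ ≤ Y₁ ≤ Y₀ + 1` almost surely and the outcomes lie in `{1, 2, 3}`, almost surely
`{Y₁ = 1} ⊆ {Y₀ = 1} ⊆ {Y₁ ∈ {1, 2}}` and `{Y₁ = 3}` is the disjoint union of `{Y₀ = 3}` and
`{Y₀ = 2, Y₁ = 3}`; so both joint probabilities are read off the marginals. -/

section

variable {Ω : Type*} [MeasurableSpace Ω] {μ : Measure Ω} {s t u : Set Ω}

lemma cond_apply_eq_div_of_ae_imp (hs : MeasurableSet s) (h : ∀ᵐ ω ∂μ, ω ∈ t → ω ∈ s) :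
    μ[t|s] = μ t / μ s := by
  have hst : (s ∩ t : Set Ω) =ᵐ[μ] t := by
    filter_upwards [h] with ω hω
    exact propext ⟨And.right, fun ht => ⟨hω ht, ht⟩⟩
  rw [cond_apply hs, measure_congr hst, ENNReal.div_eq_inv_mul]

lemma cond_eq_one_sub_cond_of_ae [IsFiniteMeasure μ] (hs : MeasurableSet s) (hμs : μ s ≠ 0)
    (ht : MeasurableSet t) (h : ∀ᵐ ω ∂μ, ω ∈ s → (ω ∈ u ↔ ω ∉ t)) :
    μ[u|s] = 1 - μ[t|s] := by
  have := cond_isProbabilityMeasure (s := s) hμs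
  rw [← prob_compl_eq_one_sub ht]
  refine measure_congr ?_
  filter_upwards [ae_cond_mem hs, cond_absolutelyContinuous.ae_le h] with ω hωs hω
  exact propext (hω hωs)

lemma measure_eq_add_measure_inter_of_ae (hu : MeasurableSet u) (hus : Disjoint u s)
    (h : ∀ᵐ ω ∂μ, ω ∈ t ↔ ω ∈ u ∨ ω ∈ s ∧ ω ∈ t) :
    μ t = μ u + μ (s ∩ t) := by
  rw [← measure_union' (hus.mono_right Set.inter_subset_left) hu]
  refine measure_congr ?_
  filter_upwards [h] with ω hω
  exact propext hω

end

theorem transition_probs_identified_three_levels_general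
    {Ω : Type*} [MeasurableSpace Ω] (P : Measure Ω) [IsProbabilityMeasure P]
    (Y₀ Y₁ : Ω → ℤ) (hY₀ : Measurable Y₀) (hY₁ : Measurable Y₁)
    (hY₀range : ∀ ω, Y₀ ω ∈ Set.Icc (1 : ℤ) 3)
    (hY₁range : ∀ ω, Y₁ ω ∈ Set.Icc (1 : ℤ) 3)
    (hmono : P {ω | Y₀ ω ≤ Y₁ ω ∧ Y₁ ω ≤ Y₀ ω + 1} = 1)
    (h1 : 0 < P {ω | Y₀ ω = 1}) :
    P[|{ω | Y₀ ω = 1}] {ω | Y₁ ω = 2}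
        = 1 - P {ω | Y₁ ω = 1} / P {ω | Y₀ ω = 1} ∧
    P[|{ω | Y₀ ω = 2}] {ω | Y₁ ω = 3}
        = (P {ω | Y₁ ω = 3} - P {ω | Y₀ ω = 3}) / P {ω | Y₀ ω = 2} := by
  have hY₀eq (n : ℤ) : MeasurableSet {ω | Y₀ ω = n} := hY₀ (measurableSet_singleton n)
  have hY₁eq (n : ℤ) : MeasurableSet {ω | Y₁ ω = n} := hY₁ (measurableSet_singleton n)
  have hae : ∀ᵐ ω ∂P, Y₀ ω ≤ Y₁ ω ∧ Y₁ ω ≤ Y₀ ω + 1 := by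
    have hmeas : MeasurableSet {ω | Y₀ ω ≤ Y₁ ω ∧ Y₁ ω ≤ Y₀ ω + 1} :=
      (measurableSet_le hY₀ hY₁).inter (measurableSet_le hY₁ (hY₀.add_const 1))
    exact (ae_iff_measure_eq hmeas.nullMeasurableSet).2 (by rw [hmono, measure_univ])
  constructor
  · rw [cond_eq_one_sub_cond_of_ae (hY₀eq 1) h1.ne' (hY₁eq 1),
      cond_apply_eq_div_of_ae_imp (hY₀eq 1)]
    all_goals
      filter_upwards [hae] with ω hω
      have := hY₀range ω
      simp only [Set.mem_Icc] at *
      omega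
  · have hY₁three :
        P {ω | Y₁ ω = 3} = P {ω | Y₀ ω = 3} + P ({ω | Y₀ ω = 2} ∩ {ω | Y₁ ω = 3}) := by
      refine measure_eq_add_measure_inter_of_ae (hY₀eq 3)
        (Set.disjoint_left.2 fun ω h3 h2 => by simp_all) ?_
      filter_upwards [hae] with ω hω
      have := hY₁range ω
      simp only [Set.mem_Icc] at *
      omega
    rw [cond_apply (hY₀eq 2), ← ENNReal.div_eq_inv_mul, hY₁three,
      ENNReal.add_sub_cancel_left (measure_ne_top _ _)]

/-- For a 3-level ordinal outcome under the monotone at-most-one-category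
effect `P(Y₀ ≤ Y₁ ≤ Y₀ + 1) = 1`, the conditional one-step transition
probabilities are identified from the marginals:
`P(Y₁ = 2 | Y₀ = 1) = 1 − P(Y₁ = 1)/P(Y₀ = 1)` and
`P(Y₁ = 3 | Y₀ = 2) = (P(Y₁ = 3) − P(Y₀ = 3))/P(Y₀ = 2)`. -/
theorem transition_probs_identified_three_levels
    {Ω : Type*} [MeasurableSpace Ω] (P : Measure Ω) [IsProbabilityMeasure P]
    (Y₀ Y₁ : Ω → ℤ) (hY₀ : Measurable Y₀) (hY₁ : Measurable Y₁)
    (hY₀range : ∀ ω, Y₀ ω ∈ Set.Icc (1 : ℤ) 3)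
    (hY₁range : ∀ ω, Y₁ ω ∈ Set.Icc (1 : ℤ) 3)
    (hmono : P {ω | Y₀ ω ≤ Y₁ ω ∧ Y₁ ω ≤ Y₀ ω + 1} = 1)
    (h1 : 0 < P {ω | Y₀ ω = 1}) (h2 : 0 < P {ω | Y₀ ω = 2}) :
    P[|{ω | Y₀ ω = 1}] {ω | Y₁ ω = 2}
        = 1 - P {ω | Y₁ ω = 1} / P {ω | Y₀ ω = 1} ∧
    P[|{ω | Y₀ ω = 2}] {ω | Y₁ ω = 3}
        = (P {ω | Y₁ ω = 3} - P {ω | Y₀ ω = 3}) / P {ω | Y₀ ω = 2} :=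
  transition_probs_identified_three_levels_general P Y₀ Y₁ hY₀ hY₁ hY₀range hY₁range hmono h1
end

section
/- Let k ≥ 2, let s₁ < s₂ < ⋯ < s_{k−1} be real thresholds, and define the step function g : ℝ → ℤ by g(z) = 1 + #{i ∈ {1, …, k−1} : s_i ≤ z}, so g takes values in {1, …, k}. Let c > 0. Then g(z + c) ≤ g(z) + 1 for all z ∈ ℝ if and only if c ≤ s_{i+1} − s_i for every i ∈ {1, …, k−2}. That is, a constant additive effect c on the latent scale moves every observation up by at most one category on the observed scale exactly when c does not exceed the smallest gap between consecutive thresholds. -/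
/-!
The jump `g (z + c) - g z` is the number of thresholds in the window `(z, z + c]`. Two
thresholds `s i < s j` fit in one such window exactly when `s j - s i < c` (take
`z = s j - c`), and for an increasing sequence the smallest difference `s j - s i` with
`i < j` is attained at consecutive indices.
-/

open Finset

section ThresholdCount

variable {ι α : Type*} [Fintype ι] [DecidableEq ι] [LinearOrder α]

theorem card_filter_le_le_add_card_filter_Ioc (s : ι → α) (a b : α) :
    #{i | s i ≤ b} ≤ #{i | s i ≤ a} + #{i | a < s i ∧ s i ≤ b} :=
  calc #{i | s i ≤ b}
      ≤ #(({i | s i ≤ a} : Finset ι) ∪ ({i | a < s i ∧ s i ≤ b} : Finset ι)) :=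
        card_le_card fun i hi ↦ by
          simp only [mem_filter, mem_univ, true_and, mem_union] at hi ⊢
          exact (le_or_gt (s i) a).imp id (⟨·, hi⟩)
    _ ≤ _ := card_union_le _ _

theorem card_filter_le_add_two_le {s : ι → α} {a b : α} {i j : ι} (hij : i ≠ j)
    (hi : a < s i ∧ s i ≤ b) (hj : a < s j ∧ s j ≤ b) :
    #{i | s i ≤ a} + 2 ≤ #{i | s i ≤ b} := by
  have hdisj : Disjoint ({i | s i ≤ a} : Finset ι) {i, j} := by
    simp only [disjoint_insert_right, disjoint_singleton_right, mem_filter, mem_univ, true_and,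
      not_le]
    exact ⟨hi.1, hj.1⟩
  calc #{i | s i ≤ a} + 2 = #(({i | s i ≤ a} : Finset ι) ∪ {i, j}) := by
        rw [card_union_of_disjoint hdisj, card_pair hij]
    _ ≤ #{i | s i ≤ b} := card_le_card <| union_subset
        (monotone_filter_right _ fun _ _ hk ↦ hk.trans (hi.1.trans_le hi.2).le)
        (insert_subset_iff.2 ⟨by simpa using hi.2, by simpa using hj.2⟩)

theorem card_filter_le_add_le_add_one_iff [LinearOrder ι] [AddCommGroup α]
    [IsOrderedAddMonoid α] {s : ι → α} (hs : StrictMono s) (c : α) :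
    (∀ z, #{i | s i ≤ z + c} ≤ #{i | s i ≤ z} + 1) ↔ ∀ i j, i < j → c ≤ s j - s i := by
  constructor
  · intro h i j hij
    by_contra! hgap
    have hc : 0 < c := (sub_pos.2 (hs hij)).trans hgap
    refine (h (s j - c)).not_gt ?_
    rw [sub_add_cancel]
    exact card_filter_le_add_two_le hij.ne
      ⟨sub_lt_comm.1 hgap, (hs hij).le⟩ ⟨sub_lt_self _ hc, le_rfl⟩
  · intro h z
    refine (card_filter_le_le_add_card_filter_Ioc s z (z + c)).trans (Nat.add_le_add_left ?_ _)
    have hwindow : ∀ i j, i < j → z < s i → s j ≤ z + c → False := fun i j hij hi hj ↦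
      (h i j hij).not_gt (sub_lt_iff_lt_add'.2 (hj.trans_lt (add_lt_add_left hi c)))
    refine card_le_one.2 fun i hi j hj ↦ ?_
    simp only [mem_filter, mem_univ, true_and] at hi hj
    by_contra hne
    rcases lt_or_gt_of_ne hne with hlt | hlt
    · exact hwindow i j hlt hi.1 hj.2
    · exact hwindow j i hlt hj.1 hi.2

end ThresholdCount

theorem forall_lt_le_sub_iff_forall_covBy {ι α : Type*} [LinearOrder ι] [LocallyFiniteOrder ι]
    [AddCommGroup α] [LinearOrder α] [IsOrderedAddMonoid α] {s : ι → α} (hs : Monotone s) (c : α) :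
    (∀ i j, i < j → c ≤ s j - s i) ↔ ∀ i j, i ⋖ j → c ≤ s j - s i := by
  refine ⟨fun h i j hij ↦ h i j hij.lt, fun h i j hij ↦ ?_⟩
  obtain ⟨k, hik, hkj⟩ := exists_covBy_le_of_lt hij
  exact (h i k hik).trans (sub_le_sub_right (hs hkj) (s i))

theorem at_most_one_category_iff_gap_general
    (k : ℕ)
    (s : Fin (k - 1) → ℝ) (hs : StrictMono s)
    (c : ℝ)
    (g : ℝ → ℤ)
    (hg : ∀ z : ℝ, g z = 1 + ((Finset.univ.filter fun i : Fin (k - 1) => s i ≤ z).card : ℤ)) :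
    (∀ z : ℝ, g (z + c) ≤ g z + 1) ↔
      (∀ i j : Fin (k - 1), (j : ℕ) = (i : ℕ) + 1 → c ≤ s j - s i) := by
  have hg_succ_le_iff (z : ℝ) :
      g (z + c) ≤ g z + 1 ↔ #{i | s i ≤ z + c} ≤ #{i | s i ≤ z} + 1 := by
    rw [hg, hg]
    omega
  simp only [hg_succ_le_iff, card_filter_le_add_le_add_one_iff hs,
    forall_lt_le_sub_iff_forall_covBy hs.monotone, Fin.covBy_iff, Nat.covBy_iff_add_one_eq,
    eq_comm]

/-- Latent-scale step function: with strictly increasing thresholds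
`s₁ < ⋯ < s_{k−1}` and `g(z) = 1 + #{i : s i ≤ z}` (values in `{1, …, k}`),
a constant additive latent effect `c > 0` moves every observation up by at
most one category, i.e. `g(z + c) ≤ g(z) + 1` for all `z`, if and only if
`c` does not exceed any gap `s_{i+1} − s_i` between consecutive thresholds. -/
theorem at_most_one_category_iff_gap
    (k : ℕ) (hk : 2 ≤ k)
    (s : Fin (k - 1) → ℝ) (hs : StrictMono s)
    (c : ℝ) (hc : 0 < c)
    (g : ℝ → ℤ)
    (hg : ∀ z : ℝ, g z = 1 + ((Finset.univ.filter fun i : Fin (k - 1) => s i ≤ z).card : ℤ)) :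
    (∀ z : ℝ, g (z + c) ≤ g z + 1) ↔
      (∀ i j : Fin (k - 1), (j : ℕ) = (i : ℕ) + 1 → c ≤ s j - s i) :=
  at_most_one_category_iff_gap_general k s hs c g hg
end
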